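/- arXiv:2412.18692 — 6 statements merged into one kernel-verified Lean document; each statement's English description precedes it below -/
import Mathlib

section
/- For every positive integer k there is exactly one subring of index k in Z^2, i.e., the only finite-index subrings of Z^2 (with componentwise multiplication and containing (1,1)) of index k are the column spans of the matrices [[k,1],[0,1]]. -/
def colSpan {n : ℕ} (A : Matrix (Fin n) (Fin n) ℤ) : AddSubgroup (Fin n → ℤ) :=
  AddSubgroup.closure (Set.range fun j => fun i => A i j)

def IsSubringOf {n : ℕ} (R : AddSubgroup (Fin n → ℤ)) : Prop :=
  (fun _ => (1 : ℤ)) ∈ R ∧ ∀ u v : Fin n → ℤ, u ∈ R → v ∈ R → u * v ∈ R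

def IsHNF {n : ℕ} (A : Matrix (Fin n) (Fin n) ℤ) : Prop :=
  (∀ i j : Fin n, (j : ℕ) < (i : ℕ) → A i j = 0) ∧
  (∀ i j : Fin n, (i : ℕ) < (j : ℕ) → 0 ≤ A i j ∧ A i j < A i i)

def IsSubringMatrix {n : ℕ} (A : Matrix (Fin n) (Fin n) ℤ) : Prop :=
  IsHNF A ∧ A.det ≠ 0 ∧ IsSubringOf (colSpan A)

def GenLE {n : ℕ} (R : AddSubgroup (Fin n → ℤ)) (k : ℕ) : Prop :=
  ∃ S : Finset ((Fin n → ℤ) ⧸ R), S.card ≤ k ∧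
    AddSubgroup.closure (S : Set ((Fin n → ℤ) ⧸ R)) = ⊤

def RankGe {n : ℕ} (R : AddSubgroup (Fin n → ℤ)) (k : ℕ) : Prop :=
  ∀ S : Finset ((Fin n → ℤ) ⧸ R),
    AddSubgroup.closure (S : Set ((Fin n → ℤ) ⧸ R)) = ⊤ → k ≤ S.card

def RankEq {n : ℕ} (R : AddSubgroup (Fin n → ℤ)) (k : ℕ) : Prop :=
  GenLE R k ∧ RankGe R k
def Sgrp (m : ℕ) : AddSubgroup (Fin 2 → ℤ) where
  carrier := {v | (m : ℤ) ∣ v 0 - v 1}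
  zero_mem' := by simp
  add_mem' := by
    intro a b ha hb
    have : (a + b) 0 - (a + b) 1 = (a 0 - a 1) + (b 0 - b 1) := by
      simp [Pi.add_apply]; ring
    rw [Set.mem_setOf_eq, this]
    exact dvd_add ha hb
  neg_mem' := by
    intro a ha
    have : (-a) 0 - (-a) 1 = -(a 0 - a 1) := by simp; ring
    rw [Set.mem_setOf_eq, this]
    exact dvd_neg.mpr ha

lemma mem_Sgrp {m : ℕ} {v : Fin 2 → ℤ} : v ∈ Sgrp m ↔ (m : ℤ) ∣ v 0 - v 1 := Iff.rfl

lemma sigma_def : ∃ σ : (Fin 2 → ℤ) →+ ℤ, ∀ v, σ v = v 0 - v 1 := by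
  refine ⟨(Pi.evalAddMonoidHom (fun _ => ℤ) 0) - (Pi.evalAddMonoidHom (fun _ => ℤ) 1), fun v => rfl⟩

lemma index_Sgrp (m : ℕ) : (Sgrp m).index = m := by
  obtain ⟨σ, hσ⟩ := sigma_def
  set φ : (Fin 2 → ℤ) →+ ZMod m := (Int.castAddHom (ZMod m)).comp σ with hφ
  have hker : φ.ker = Sgrp m := by
    ext v
    rw [AddMonoidHom.mem_ker, hφ, AddMonoidHom.comp_apply, Int.coe_castAddHom, hσ, ZMod.intCast_zmod_eq_zero_iff_dvd, mem_Sgrp]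
  have hsurj : Function.Surjective φ := by
    intro z
    obtain ⟨t, rfl⟩ := ZMod.intCast_surjective z
    exact ⟨![t, 0], by simp [hφ, hσ]⟩
  rw [← hker, AddSubgroup.index_ker]
  rw [AddMonoidHom.range_eq_top.mpr hsurj,
    Nat.card_congr AddSubgroup.topEquiv.toEquiv, Nat.card_zmod]


lemma colSpan_eq (m : ℕ) : colSpan !![(m : ℤ), 1; 0, 1] = Sgrp m := by
  set A := !![(m : ℤ), 1; 0, 1] with hA
  apply le_antisymm
  · rw [colSpan, AddSubgroup.closure_le]
    rintro x ⟨j, rfl⟩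
    fin_cases j <;> simp [mem_Sgrp, hA]
  · intro v hv
    obtain ⟨c, hc⟩ := hv
    have h0 : (fun i => A i 0) ∈ colSpan A := AddSubgroup.subset_closure ⟨0, rfl⟩
    have h1 : (fun i => A i 1) ∈ colSpan A := AddSubgroup.subset_closure ⟨1, rfl⟩
    have := AddSubgroup.add_mem _ (AddSubgroup.zsmul_mem _ h0 c) (AddSubgroup.zsmul_mem _ h1 (v 1))
    convert this using 1
    funext i
    fin_cases i <;> simp [hA, Matrix.vecHead, Matrix.vecTail] <;> linarith

lemma isSubringOf_Sgrp (m : ℕ) : IsSubringOf (Sgrp m) := by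
  constructor
  · simp [mem_Sgrp]
  · intro u v hu hv
    rw [mem_Sgrp] at hu hv ⊢
    have : (u * v) 0 - (u * v) 1 = u 0 * (v 0 - v 1) + v 1 * (u 0 - u 1) := by
      simp [Pi.mul_apply]; ring
    rw [this]
    exact dvd_add (hv.mul_left _) (hu.mul_left _)

theorem subring_Z2_unique (k : ℕ) (hk : 0 < k) (R : AddSubgroup (Fin 2 → ℤ)) :
    (IsSubringOf R ∧ R.index = k) ↔ R = colSpan !![(k : ℤ), 1; 0, 1] := by
  rw [colSpan_eq]
  constructor
  · rintro ⟨⟨hone, -⟩, hidx⟩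
    set T : AddSubgroup ℤ :=
      { carrier := {t : ℤ | ![t, 0] ∈ R}
        zero_mem' := by
          have h : ![(0 : ℤ), 0] = (0 : Fin 2 → ℤ) := by
            funext i; fin_cases i <;> rfl
          show ![(0 : ℤ), 0] ∈ R
          rw [h]; exact R.zero_mem
        add_mem' := by
          intro a b ha hb
          have h : ![a + b, 0] = ![a, 0] + ![b, 0] := by
            funext i; fin_cases i <;> simp
          show ![a + b, 0] ∈ R
          rw [h]; exact R.add_mem ha hb
        neg_mem' := by
          intro a ha
          have h : ![-a, 0] = -![a, 0] := by
            funext i; fin_cases i <;> simp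
          show ![-a, 0] ∈ R
          rw [h]; exact R.neg_mem ha } with hT
    obtain ⟨d, hd⟩ := Int.subgroup_cyclic T
    have hmem : ∀ v : Fin 2 → ℤ, v ∈ R ↔ d ∣ v 0 - v 1 := by
      intro v
      constructor
      · intro hv
        have h1 : v - (v 1) • (fun _ => (1 : ℤ)) ∈ R :=
          R.sub_mem hv (R.zsmul_mem hone (v 1))
        have h2 : v - (v 1) • (fun _ => (1 : ℤ)) = ![v 0 - v 1, 0] := by
          funext i; fin_cases i <;> simp
        rw [h2] at h1
        have h3 : v 0 - v 1 ∈ T := h1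
        rw [hd, AddSubgroup.mem_closure_singleton] at h3
        obtain ⟨n, hn⟩ := h3
        exact ⟨n, by rw [← hn, smul_eq_mul]; ring⟩
      · rintro ⟨c, hc⟩
        have h3 : v 0 - v 1 ∈ T := by
          rw [hd, AddSubgroup.mem_closure_singleton]
          exact ⟨c, by rw [smul_eq_mul, hc]; ring⟩
        have h1 : (![v 0 - v 1, 0] : Fin 2 → ℤ) ∈ R := h3
        have h2 : v = ![v 0 - v 1, 0] + (v 1) • (fun _ => (1 : ℤ)) := by
          funext i; fin_cases i <;> simp
        rw [h2]
        exact R.add_mem h1 (R.zsmul_mem hone (v 1))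
    have hR : R = Sgrp d.natAbs := by
      ext v
      rw [mem_Sgrp, hmem]
      exact (Int.natAbs_dvd).symm
    rw [hR, index_Sgrp] at hidx
    rw [hR, hidx]
  · rintro rfl
    exact ⟨isSubringOf_Sgrp k, index_Sgrp k⟩
end

section
/- Let p be prime and let A be an n×n subring matrix (a matrix in Hermite normal form whose column span is a subring of Z^n) with determinant a power of p and with diagonal (p^{e_1},...,p^{e_{n-1}},1) where every e_i ≥ 1. Then the last column of A is (1,1,...,1)^T and every entry of the first n-1 columns of A is divisible by p. -/
lemma mem_colSpan_iff {m : ℕ} (A : Matrix (Fin m) (Fin m) ℤ) (v : Fin m → ℤ) :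
    v ∈ colSpan A ↔ ∃ x : Fin m → ℤ, v = A.mulVec x := by
  rw [colSpan, ← Submodule.span_int_eq_addSubgroupClosure, Submodule.mem_toAddSubgroup,
    Submodule.mem_span_range_iff_exists_fun]
  constructor
  · rintro ⟨c, hc⟩
    exact ⟨c, by rw [← hc]; funext i; simp [Matrix.mulVec, dotProduct, mul_comm]⟩
  · rintro ⟨c, hc⟩
    exact ⟨c, by rw [hc]; funext i; simp [Matrix.mulVec, dotProduct, mul_comm]⟩

theorem irreducible_subring_matrix_structure (n p : ℕ) (hp : p.Prime)
    (A : Matrix (Fin (n + 1)) (Fin (n + 1)) ℤ) (hA : IsSubringMatrix A)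
    (hdetp : ∃ m : ℕ, A.det = (p : ℤ) ^ m)
    (e : Fin n → ℕ) (he : ∀ i, 1 ≤ e i)
    (hdiag : ∀ i : Fin n, A i.castSucc i.castSucc = (p : ℤ) ^ e i)
    (hlast : A (Fin.last n) (Fin.last n) = 1) :
    (∀ i, A i (Fin.last n) = 1) ∧ (∀ i, ∀ j : Fin n, (p : ℤ) ∣ A i j.castSucc) := by
  obtain ⟨⟨hlow, hup⟩, hdet, hone, hmul⟩ := hA
  have hp2 : (2:ℤ) ≤ (p:ℤ) := by exact_mod_cast hp.two_le
  have hdiag2 : ∀ i : Fin n, (2:ℤ) ≤ A i.castSucc i.castSucc := by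
    intro i
    rw [hdiag i]
    calc (2:ℤ) ≤ (p:ℤ) := hp2
    _ = (p:ℤ)^1 := (pow_one _).symm
    _ ≤ (p:ℤ)^(e i) := pow_le_pow_right₀ (by linarith) (he i)
  have hAkk_ne : ∀ k : Fin (n+1), A k k ≠ 0 := by
    intro k
    by_cases hk : k = Fin.last n
    · rw [hk, hlast]; exact one_ne_zero
    · have h2 := hdiag2 (k.castPred hk)
      rw [Fin.castSucc_castPred] at h2
      intro h0; rw [h0] at h2; linarith
  -- Part 1
  obtain ⟨x, hx⟩ := (mem_colSpan_iff A _).mp hone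
  have hxi : ∀ i : Fin (n+1), (1:ℤ) = ∑ l, A i l * x l := by
    intro i
    have := congrFun hx i
    simpa [Matrix.mulVec, dotProduct] using this
  have key1 : ∀ m : ℕ, ∀ i : Fin (n+1), n - (i:ℕ) < m →
      (A i (Fin.last n) = 1 ∧ x i = if i = Fin.last n then 1 else 0) := by
    intro m
    induction m with
    | zero => intro i hi; omega
    | succ m ih =>
      intro i hi
      by_cases hil : i = Fin.last n
      · subst hil
        have hsum : ∑ l, A (Fin.last n) l * x l
            = A (Fin.last n) (Fin.last n) * x (Fin.last n) := by
          apply Finset.sum_eq_single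
          · intro l _ hl
            have hlv : (l:ℕ) < n := by
              have h1 : (l:ℕ) < n + 1 := l.isLt
              have h2 : (l:ℕ) ≠ n := fun h => hl (Fin.ext (by simp [h, Fin.last]))
              omega
            rw [hlow _ _ (by simpa using hlv), zero_mul]
          · intro h; exact absurd (Finset.mem_univ _) h
        have heq := hxi (Fin.last n)
        rw [hsum, hlast, one_mul] at heq
        simp [← heq, hlast]
      · have hival : (i:ℕ) < n := by
          have h1 : (i:ℕ) < n + 1 := i.isLt
          have h2 : (i:ℕ) ≠ n := fun h => hil (Fin.ext (by simp [h, Fin.last]))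
          omega
        have hIH : ∀ l : Fin (n+1), (i:ℕ) < (l:ℕ) →
            (A l (Fin.last n) = 1 ∧ x l = if l = Fin.last n then 1 else 0) := by
          intro l hl; exact ih l (by omega)
        have hne : i ≠ Fin.last n := hil
        have hsum : ∑ l, A i l * x l = A i i * x i + A i (Fin.last n) * x (Fin.last n) := by
          have h0 : ∀ l ∈ Finset.univ, l ∉ ({i, Fin.last n} : Finset (Fin (n+1))) →
              A i l * x l = 0 := by
            intro l _ hl
            simp only [Finset.mem_insert, Finset.mem_singleton] at hl
            push_neg at hl
            obtain ⟨hl1, hl2⟩ := hl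
            rcases lt_trichotomy ((l:ℕ)) ((i:ℕ)) with h | h | h
            · rw [hlow _ _ h, zero_mul]
            · exact absurd (Fin.ext h) hl1
            · rw [(hIH l h).2, if_neg hl2, mul_zero]
          calc ∑ l, A i l * x l
              = ∑ l ∈ ({i, Fin.last n} : Finset (Fin (n+1))), A i l * x l :=
                (Finset.sum_subset (Finset.subset_univ _) h0).symm
            _ = A i i * x i + A i (Fin.last n) * x (Fin.last n) := Finset.sum_pair hne
        have hxlast : x (Fin.last n) = 1 := by
          have := (hIH (Fin.last n) (by simp [Fin.last, hival])).2
          simpa using this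
        have heq := hxi i
        rw [hsum, hxlast, mul_one] at heq
        have hbound := hup i (Fin.last n) (by simp [Fin.last, hival])
        have hAii : (2:ℤ) ≤ A i i := by
          have := hdiag2 (i.castPred hil)
          rwa [Fin.castSucc_castPred] at this
        -- 1 = A i i * x i + A i last, 0 ≤ A i last < A i i, 2 ≤ A i i
        have ht1 : x i < 1 := by nlinarith [hbound.1, hbound.2]
        have ht2 : (-1:ℤ) < x i := by nlinarith [hbound.1, hbound.2]
        have ht0 : x i = 0 := by omega
        rw [ht0, mul_zero, zero_add] at heq
        exact ⟨heq.symm, by rw [if_neg hil]; exact ht0⟩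
  have part1 : ∀ i, A i (Fin.last n) = 1 := fun i => (key1 (n+1) i (by omega)).1
  -- Part 2
  have hpZ : Prime (p:ℤ) := Nat.prime_iff_prime_int.mp hp
  have hpdvdpow : ∀ j : Fin n, (p:ℤ) ∣ (p:ℤ) ^ e j := fun j =>
    dvd_pow_self _ (Nat.one_le_iff_ne_zero.mp (he j))
  have key2 : ∀ m : ℕ, ∀ j : Fin n, (j:ℕ) < m → ∀ i, (p:ℤ) ∣ A i j.castSucc := by
    intro m
    induction m with
    | zero => intro j hj; omega
    | succ m ihm =>
      intro j hj i
      have hc : (fun i => A i j.castSucc) ∈ colSpan A :=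
        AddSubgroup.subset_closure ⟨j.castSucc, rfl⟩
      obtain ⟨x, hx⟩ := (mem_colSpan_iff A _).mp (hmul _ _ hc hc)
      have hxi2 : ∀ i : Fin (n+1), A i j.castSucc * A i j.castSucc = ∑ l, A i l * x l := by
        intro i
        have := congrFun hx i
        simpa [Matrix.mulVec, dotProduct] using this
      have hjv : ((j.castSucc : Fin (n+1)) : ℕ) = (j:ℕ) := rfl
      -- step A : x l = 0 for l > j.castSucc
      have stepA : ∀ m' : ℕ, ∀ k : Fin (n+1), (j:ℕ) < (k:ℕ) → n - (k:ℕ) < m' → x k = 0 := by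
        intro m'
        induction m' with
        | zero => intro k hk1 hk2; omega
        | succ m' ihk =>
          intro k hk1 hk2
          have hzero : A k j.castSucc = 0 := hlow _ _ (by rw [hjv]; exact hk1)
          have heq := hxi2 k
          rw [hzero, mul_zero] at heq
          have hsum : ∑ l, A k l * x l = A k k * x k := by
            apply Finset.sum_eq_single
            · intro l _ hl
              rcases lt_trichotomy ((l:ℕ)) ((k:ℕ)) with h | h | h
              · rw [hlow _ _ h, zero_mul]
              · exact absurd (Fin.ext h) hl
              · rw [ihk l (by omega) (by omega), mul_zero]
            · intro h; exact absurd (Finset.mem_univ _) h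
          rw [hsum] at heq
          exact (mul_eq_zero.mp heq.symm).resolve_left (hAkk_ne k)
      -- step B : p ∣ x j.castSucc
      have stepB : (p:ℤ) ∣ x j.castSucc := by
        have heq := hxi2 j.castSucc
        have hsum : ∑ l, A j.castSucc l * x l = A j.castSucc j.castSucc * x j.castSucc := by
          apply Finset.sum_eq_single
          · intro l _ hl
            rcases lt_trichotomy ((l:ℕ)) ((j:ℕ)) with h | h | h
            · rw [hlow _ _ (by rw [hjv]; exact h), zero_mul]
            · exact absurd (Fin.ext (by rw [hjv]; exact h)) hl
            · rw [stepA (n+1) l (by omega) (by omega), mul_zero]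
          · intro h; exact absurd (Finset.mem_univ _) h
        rw [hsum, hdiag j] at heq
        have hxj : (p:ℤ) ^ e j = x j.castSucc :=
          mul_left_cancel₀ (pow_ne_zero _ (by positivity : ((p:ℤ)) ≠ 0)) heq
        rw [← hxj]; exact hpdvdpow j
      -- now conclude for row i
      rcases lt_trichotomy ((i:ℕ)) ((j:ℕ)) with h | h | h
      · -- i < j : use the sum
        have heq := hxi2 i
        have hdvd : (p:ℤ) ∣ ∑ l, A i l * x l := by
          apply Finset.dvd_sum
          intro l _
          rcases lt_trichotomy ((l:ℕ)) ((j:ℕ)) with h2 | h2 | h2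
          · -- l corresponds to an earlier column
            have hlv : (l:ℕ) < n := by have := j.isLt; omega
            have hll : l ≠ Fin.last n := by
              intro hh; rw [hh] at hlv; simp [Fin.last] at hlv
            have hcast : (l.castPred hll).castSucc = l := Fin.castSucc_castPred l hll
            have hlc : ((l.castPred hll : Fin n) : ℕ) = (l : ℕ) := rfl
            have := ihm (l.castPred hll) (by omega) i
            rw [hcast] at this
            exact dvd_mul_of_dvd_left this _
          · have : l = j.castSucc := Fin.ext (by rw [hjv]; exact h2)
            rw [this]
            exact dvd_mul_of_dvd_right stepB _
          · rw [stepA (n+1) l (by omega) (by omega), mul_zero]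
            exact dvd_zero _
        rw [← heq] at hdvd
        exact (hpZ.dvd_mul.mp hdvd).elim id id
      · have : i = j.castSucc := Fin.ext (by rw [hjv]; exact h)
        rw [this, hdiag j]
        exact hpdvdpow j
      · rw [hlow _ _ (by rw [hjv]; exact h)]
        exact dvd_zero _
  exact ⟨part1, fun i j => key2 (n+1) j (by omega) i⟩
end

section
/- Let A be an n×n subring matrix with diagonal (p^{e_1},...,p^{e_{n-1}},1) and let I = {i : e_i ≠ 0}. For any i, j ∈ I, the componentwise product v_i ∘ v_j of the corresponding columns lies in the span of the columns {v_t : t ∈ I}. -/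
theorem hadamard_product_in_span (n p : ℕ) (hp : p.Prime)
    (A : Matrix (Fin (n + 1)) (Fin (n + 1)) ℤ) (hA : IsSubringMatrix A)
    (e : Fin n → ℕ)
    (hdiag : ∀ i : Fin n, A i.castSucc i.castSucc = (p : ℤ) ^ e i)
    (hlast : A (Fin.last n) (Fin.last n) = 1)
    (i j : Fin n) (hi : e i ≠ 0) (hj : e j ≠ 0) :
    ((fun r => A r i.castSucc * A r j.castSucc) : Fin (n + 1) → ℤ) ∈
      AddSubgroup.closure
        {v : Fin (n + 1) → ℤ | ∃ t : Fin n, e t ≠ 0 ∧ v = fun r => A r t.castSucc} := by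
  obtain ⟨⟨hlow, hup⟩, hdet, hone, hmul⟩ := hA
  -- rows at "trivial" indices are standard basis rows
  have hrow : ∀ t : Fin (n + 1),
      (t = Fin.last n ∨ ∃ s : Fin n, t = s.castSucc ∧ e s = 0) →
      ∀ r : Fin (n + 1), A t r = if r = t then 1 else 0 := by
    intro t ht r
    have htt : A t t = 1 := by
      rcases ht with rfl | ⟨s, rfl, hs⟩
      · exact hlast
      · rw [hdiag s, hs, pow_zero]
    by_cases hr : r = t
    · simp [hr, htt]
    · simp only [hr, if_false]
      rcases lt_or_gt_of_ne (fun h : (r : ℕ) = (t : ℕ) => hr (Fin.ext h)) with h | h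
      · exact hlow t r h
      · have := hup t r h
        omega
  -- the product is in the column span
  have hcol : ∀ s : Fin (n + 1), (fun r => A r s) ∈ colSpan A :=
    fun s => AddSubgroup.subset_closure ⟨s, rfl⟩
  have hprod : ((fun r => A r i.castSucc * A r j.castSucc) : Fin (n + 1) → ℤ) ∈ colSpan A := by
    have := hmul (fun r => A r i.castSucc) (fun r => A r j.castSucc)
      (hcol i.castSucc) (hcol j.castSucc)
    simpa [Pi.mul_def] using this
  -- convert to span ℤ and get coefficients
  rw [colSpan, ← Submodule.span_int_eq_addSubgroupClosure,
    Submodule.mem_toAddSubgroup, Submodule.mem_span_range_iff_exists_fun] at hprod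
  obtain ⟨c, hc⟩ := hprod
  -- coefficients at trivial indices vanish
  have hczero : ∀ t : Fin (n + 1),
      (t = Fin.last n ∨ ∃ s : Fin n, t = s.castSucc ∧ e s = 0) → c t = 0 := by
    intro t ht
    have hti : A t i.castSucc = 0 := by
      rw [hrow t ht]
      have : i.castSucc ≠ t := by
        rcases ht with rfl | ⟨s, rfl, hs⟩
        · exact Fin.castSucc_lt_last i |>.ne
        · intro h
          exact hi (by rwa [Fin.castSucc_injective _ h])
      simp [this]
    have := congrFun hc t
    simp only [Finset.sum_apply, Pi.smul_apply, smul_eq_mul] at this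
    rw [Finset.sum_eq_single t] at this
    · rw [hrow t ht t] at this
      simp at this
      rw [this, hti, zero_mul]
    · intro b _ hb
      rw [hrow t ht b, if_neg hb, mul_zero]
    · simp
  -- conclude
  rw [← hc]
  refine AddSubgroup.sum_mem _ fun t _ => ?_
  by_cases ht : t = Fin.last n ∨ ∃ s : Fin n, t = s.castSucc ∧ e s = 0
  · rw [hczero t ht, zero_smul]
    exact AddSubgroup.zero_mem _
  · push_neg at ht
    obtain ⟨ht1, ht2⟩ := ht
    obtain ⟨s, rfl⟩ := Fin.exists_castSucc_eq.2 ht1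
    have hes : e s ≠ 0 := fun h => ht2 s rfl h
    have hmem : ((fun r => A r s.castSucc) : Fin (n + 1) → ℤ) ∈
        AddSubgroup.closure
          {v : Fin (n + 1) → ℤ | ∃ t : Fin n, e t ≠ 0 ∧ v = fun r => A r t.castSucc} :=
      AddSubgroup.subset_closure ⟨s, hes, rfl⟩
    exact AddSubgroup.zsmul_mem _ hmem _
end

section
/- For n ≥ 2, e ≥ 1, and p prime, the number of subrings R ⊆ Z^n with [Z^n : R] = p^e and cyclic quotient Z^n/R is exactly binomial(n,2). Explicitly, for each 1 ≤ i ≤ n-1 there are exactly n-i such subrings whose Hermite normal form matrix has p^e in position (i,i), and summing gives binomial(n,2). -/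
theorem isLocalRing_zmod_prime_pow {p e : ℕ} [Fact p.Prime] (he : e ≠ 0) :
    IsLocalRing (ZMod (p ^ e)) :=
  have : Fact (1 < p ^ e) := ⟨Nat.one_lt_pow he (Fact.out : p.Prime).one_lt⟩
  .of_surjective' (PadicInt.toZModPow e) (ZMod.ringHom_surjective _)

theorem AddSubgroup.exists_surjective_zmod_ker_eq {G : Type*} [AddCommGroup G]
    {R : AddSubgroup G} {m : ℕ} (hidx : R.index = m) [hcyc : IsAddCyclic (G ⧸ R)] :
    ∃ φ : G →+ ZMod m, Function.Surjective φ ∧ φ.ker = R := by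
  obtain rfl : Nat.card (G ⧸ R) = m := hidx
  let e := (zmodAddCyclicAddEquiv hcyc).symm
  refine ⟨e.toAddMonoidHom.comp (QuotientAddGroup.mk' R),
    e.surjective.comp (QuotientAddGroup.mk'_surjective R), ?_⟩
  ext x
  rw [AddMonoidHom.mem_ker, AddMonoidHom.comp_apply, AddEquiv.coe_toAddMonoidHom,
    AddEquiv.map_eq_zero_iff, QuotientAddGroup.mk'_apply, QuotientAddGroup.eq_zero_iff]

theorem AddMonoidHom.apply_eq_dotProduct {A ι : Type*} [CommRing A] [Fintype ι] [DecidableEq ι]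
    (φ : (ι → ℤ) →+ A) (x : ι → ℤ) :
    φ x = (fun k => (x k : A)) ⬝ᵥ fun k => φ (Pi.single k 1) := by
  conv_lhs => rw [← Finset.univ_sum_single x]
  simp only [map_sum, dotProduct]
  refine Finset.sum_congr rfl fun k _ => ?_
  rw [← zsmul_eq_mul, ← map_zsmul, ← Pi.single_smul', smul_eq_mul, mul_one]

section DotProduct

variable {A ι : Type*} [CommRing A] [Fintype ι]

def IsMulClosedKer (ψ : ι → A) : Prop :=
  ∀ x y : ι → A, x ⬝ᵥ ψ = 0 → y ⬝ᵥ ψ = 0 → (x * y) ⬝ᵥ ψ = 0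

theorem exists_isUnit_of_dotProduct_eq_one [IsLocalRing A] {x ψ : ι → A} (h : x ⬝ᵥ ψ = 1) :
    ∃ i, IsUnit (ψ i) := by
  by_contra! hψ
  have hmem : x ⬝ᵥ ψ ∈ IsLocalRing.maximalIdeal A :=
    Ideal.sum_mem _ fun k _ => Ideal.mul_mem_left _ _ ((IsLocalRing.mem_maximalIdeal _).2 (hψ k))
  exact (IsLocalRing.maximalIdeal.isMaximal A).ne_top ((Ideal.eq_top_iff_one _).2 (h ▸ hmem))

variable [DecidableEq ι] {ψ : ι → A} {i : ι}

theorem IsMulClosedKer.single_mul_single_dotProduct_add_eq_zero (hmul : IsMulClosedKer ψ) {k l : ι}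
    (hk : k ≠ i) (hl : l ≠ i) :
    (Pi.single k (ψ i) * Pi.single l (ψ i)) ⬝ᵥ ψ + ψ k * ψ l * ψ i = 0 := by
  have hker : ∀ k, (Pi.single k (ψ i) - Pi.single i (ψ k)) ⬝ᵥ ψ = 0 := fun k => by
    simp [sub_dotProduct, single_dotProduct, mul_comm]
  have hprod : (Pi.single k (ψ i) - Pi.single i (ψ k) : ι → A) *
      (Pi.single l (ψ i) - Pi.single i (ψ l)) =
        Pi.single k (ψ i) * Pi.single l (ψ i) + Pi.single i (ψ k * ψ l) := by
    funext t
    by_cases hti : t = i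
    · subst hti; simp [hk.symm, hl.symm]
    · simp [Pi.single_apply, hti]
  simpa only [hprod, add_dotProduct, single_dotProduct] using hmul _ _ (hker k) (hker l)

theorem IsMulClosedKer.mul_add_eq_zero (hmul : IsMulClosedKer ψ) (hu : IsUnit (ψ i)) {k : ι}
    (hk : k ≠ i) : ψ k * (ψ i + ψ k) = 0 := by
  have := hmul.single_mul_single_dotProduct_add_eq_zero hk hk
  rw [← Pi.single_mul, single_dotProduct] at this
  exact hu.mul_right_eq_zero.1 (by linear_combination this)

theorem IsMulClosedKer.mul_eq_zero (hmul : IsMulClosedKer ψ) (hu : IsUnit (ψ i)) {k l : ι}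
    (hk : k ≠ i) (hl : l ≠ i) (hkl : k ≠ l) : ψ k * ψ l = 0 := by
  have := hmul.single_mul_single_dotProduct_add_eq_zero hk hl
  have hzero : (Pi.single k (ψ i) * Pi.single l (ψ i) : ι → A) = 0 := by
    funext t
    by_cases htk : t = k
    · subst htk; simp [hkl]
    · simp [htk]
  rw [hzero, zero_dotProduct, zero_add] at this
  exact hu.mul_left_eq_zero.1 this

theorem IsMulClosedKer.eq_single_sub_single [IsLocalRing A] (hmul : IsMulClosedKer ψ)
    (hone : 1 ⬝ᵥ ψ = 0) (hu : IsUnit (ψ i)) :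
    ∃ j ≠ i, ψ = Pi.single i (ψ i) - Pi.single j (ψ i) := by
  have hdich : ∀ k ≠ i, ψ k = 0 ∨ IsUnit (ψ k) := fun k hk => by
    refine or_iff_not_imp_right.2 fun hk' => ?_
    have hsum : IsUnit (ψ i + ψ k) :=
      (IsLocalRing.isUnit_or_isUnit_of_isUnit_add (b := -ψ k) (by simpa using hu)).resolve_right
        (by simpa using hk')
    exact hsum.mul_left_eq_zero.1 (hmul.mul_add_eq_zero hu hk)
  obtain ⟨j, hji, hj⟩ : ∃ j ≠ i, ψ j ≠ 0 := by
    by_contra! h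
    rw [one_dotProduct, Fintype.sum_eq_single i h] at hone
    exact hu.ne_zero hone
  have hju := (hdich j hji).resolve_left hj
  have hrest : ∀ k, k ≠ i → k ≠ j → ψ k = 0 := fun k hki hkj =>
    hju.mul_left_eq_zero.1 (hmul.mul_eq_zero hu hki hji hkj)
  rw [one_dotProduct, Fintype.sum_eq_add i j hji.symm fun k hk => hrest k hk.1 hk.2] at hone
  refine ⟨j, hji, funext fun k => ?_⟩
  by_cases hki : k = i
  · subst hki; simp [hji]
  by_cases hkj : k = j
  · subst hkj; simp [hki]; linear_combination hone
  · simp [hki, hkj, hrest k hki hkj]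

end DotProduct

section CoordCongr

variable {ι : Type*}

def coordDiff (m : ℕ) (i j : ι) : (ι → ℤ) →+ ZMod m :=
  (Int.castAddHom (ZMod m)).comp
    (Pi.evalAddMonoidHom (fun _ => ℤ) i - Pi.evalAddMonoidHom (fun _ => ℤ) j)

def coordCongr (m : ℕ) (i j : ι) : AddSubgroup (ι → ℤ) :=
  (coordDiff m i j).ker

theorem mem_coordCongr {m : ℕ} {i j : ι} {x : ι → ℤ} :
    x ∈ coordCongr m i j ↔ (x i : ZMod m) = x j := by
  simp [coordCongr, coordDiff, sub_eq_zero]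

theorem coordCongr_comm (m : ℕ) (i j : ι) : coordCongr m i j = coordCongr m j i := by
  ext x
  simp only [mem_coordCongr, eq_comm]

theorem isSubringOf_coordCongr {n : ℕ} (m : ℕ) (i j : Fin n) : IsSubringOf (coordCongr m i j) :=
  ⟨mem_coordCongr.2 rfl, fun u v hu hv => by
    rw [mem_coordCongr] at *
    simp [hu, hv]⟩

variable [DecidableEq ι] {m : ℕ} {i j : ι}

theorem coordDiff_surjective [NeZero m] (hij : i ≠ j) : Function.Surjective (coordDiff m i j) :=
  fun c => ⟨Pi.single i (c.val : ℤ), by simp [coordDiff, hij.symm]⟩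

theorem index_coordCongr [NeZero m] (hij : i ≠ j) : (coordCongr m i j).index = m :=
  (AddSubgroup.index_ker _).trans <| by
    rw [AddMonoidHom.range_eq_top.2 (coordDiff_surjective hij), AddSubgroup.card_top,
      Nat.card_zmod]

theorem isAddCyclic_quotient_coordCongr [NeZero m] (hij : i ≠ j) :
    IsAddCyclic ((ι → ℤ) ⧸ coordCongr m i j) :=
  isAddCyclic_of_surjective _
    (QuotientAddGroup.quotientKerEquivOfSurjective _ (coordDiff_surjective hij)).symm.surjective

theorem single_mem_coordCongr_iff [Fact (1 < m)] (hij : i ≠ j) (k : ι) :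
    Pi.single k 1 ∈ coordCongr m i j ↔ k ∉ s(i, j) := by
  rcases eq_or_ne k i with rfl | hki
  · simp [mem_coordCongr, hij]
  rcases eq_or_ne k j with rfl | hkj
  · simp [mem_coordCongr, hki.symm]
  · simp [mem_coordCongr, hki, hkj, hki.symm, hkj.symm]

theorem sym2_eq_of_coordCongr_eq [Fact (1 < m)] {i' j' : ι} (hij : i ≠ j) (hij' : i' ≠ j')
    (h : coordCongr m i j = coordCongr m i' j') : s(i, j) = s(i', j') :=
  Sym2.ext fun k => by
    rw [← not_iff_not, ← single_mem_coordCongr_iff (m := m) hij,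
      ← single_mem_coordCongr_iff (m := m) hij', h]

def sym2CoordCongr (m : ℕ) : Sym2 ι → AddSubgroup (ι → ℤ) :=
  Sym2.lift ⟨coordCongr m, coordCongr_comm m⟩

theorem sym2CoordCongr_injOn [Fact (1 < m)] :
    Set.InjOn (sym2CoordCongr (ι := ι) m) {z | ¬z.IsDiag} := by
  intro z hz w hw h
  induction z using Sym2.ind
  induction w using Sym2.ind
  exact sym2_eq_of_coordCongr_eq (by simpa using hz) (by simpa using hw) h

end CoordCongr

def IsCocyclicSubring {n : ℕ} (m : ℕ) (R : AddSubgroup (Fin n → ℤ)) : Prop :=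
  IsSubringOf R ∧ R.index = m ∧ IsAddCyclic ((Fin n → ℤ) ⧸ R)

theorem isCocyclicSubring_sym2CoordCongr {n m : ℕ} [NeZero m] {z : Sym2 (Fin n)}
    (hz : ¬z.IsDiag) : IsCocyclicSubring m (sym2CoordCongr m z) := by
  induction z using Sym2.ind with | h i j =>
  have hij : i ≠ j := by simpa using hz
  exact ⟨isSubringOf_coordCongr m i j, index_coordCongr hij, isAddCyclic_quotient_coordCongr hij⟩

theorem IsCocyclicSubring.exists_eq_coordCongr {n p e : ℕ} [Fact p.Prime] (he : e ≠ 0)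
    {R : AddSubgroup (Fin n → ℤ)} (hR : IsCocyclicSubring (p ^ e) R) :
    ∃ i j, i ≠ j ∧ R = coordCongr (p ^ e) i j := by
  obtain ⟨hsub, hidx, hcyc⟩ := hR
  have := isLocalRing_zmod_prime_pow (p := p) he
  obtain ⟨φ, hsurj, hker⟩ := AddSubgroup.exists_surjective_zmod_ker_eq hidx
  set ψ : Fin n → ZMod (p ^ e) := fun k => φ (Pi.single k 1)
  have hmem : ∀ x, x ∈ R ↔ (fun k => (x k : ZMod (p ^ e))) ⬝ᵥ ψ = 0 := fun x => by
    rw [← hker, AddMonoidHom.mem_ker, φ.apply_eq_dotProduct]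
  have hmul : IsMulClosedKer ψ := by
    intro x y hx hy
    obtain ⟨x, rfl⟩ := ZMod.intCast_surjective.comp_left x
    obtain ⟨y, rfl⟩ := ZMod.intCast_surjective.comp_left y
    convert (hmem _).1 (hsub.2 x y ((hmem x).2 hx) ((hmem y).2 hy)) using 2
    ext k
    simp
  have hone : 1 ⬝ᵥ ψ = 0 := by simpa [Pi.one_def] using (hmem _).1 hsub.1
  obtain ⟨i, hu⟩ : ∃ i, IsUnit (ψ i) := by
    obtain ⟨x, hx⟩ := hsurj 1
    exact exists_isUnit_of_dotProduct_eq_one ((φ.apply_eq_dotProduct x).symm.trans hx)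
  obtain ⟨j, hji, hψ⟩ := hmul.eq_single_sub_single hone hu
  refine ⟨i, j, hji.symm, AddSubgroup.ext fun x => ?_⟩
  rw [hmem, mem_coordCongr, hψ, dotProduct_sub, dotProduct_single, dotProduct_single, ← sub_mul,
    hu.mul_left_eq_zero, sub_eq_zero]

theorem count_cocyclic_subrings_general (n e p : ℕ) (he : 1 ≤ e) (hp : p.Prime) :
    Nat.card {R : AddSubgroup (Fin n → ℤ) // IsSubringOf R ∧ R.index = p ^ e ∧
      IsAddCyclic ((Fin n → ℤ) ⧸ R)} = n.choose 2 := by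
  change Nat.card {R // IsCocyclicSubring (p ^ e) R} = _
  have : Fact p.Prime := ⟨hp⟩
  have : Fact (1 < p ^ e) := ⟨Nat.one_lt_pow (by omega) hp.one_lt⟩
  let f : {z : Sym2 (Fin n) // ¬z.IsDiag} → {R // IsCocyclicSubring (p ^ e) R} :=
    fun z => ⟨sym2CoordCongr (p ^ e) z.1, isCocyclicSubring_sym2CoordCongr z.2⟩
  have hf : Function.Bijective f := by
    refine ⟨fun z w h => Subtype.ext (sym2CoordCongr_injOn z.2 w.2 (congrArg Subtype.val h)), ?_⟩
    rintro ⟨R, hR⟩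
    obtain ⟨i, j, hij, rfl⟩ := hR.exists_eq_coordCongr (by omega)
    exact ⟨⟨s(i, j), by simpa using hij⟩, rfl⟩
  rw [← Nat.card_eq_of_bijective f hf, Nat.card_eq_fintype_card, Sym2.card_subtype_not_diag,
    Fintype.card_fin]

theorem count_cocyclic_subrings (n e p : ℕ) (hn : 2 ≤ n) (he : 1 ≤ e) (hp : p.Prime) :
    Nat.card {R : AddSubgroup (Fin n → ℤ) // IsSubringOf R ∧ R.index = p ^ e ∧
      IsAddCyclic ((Fin n → ℤ) ⧸ R)} = n.choose 2 :=
  count_cocyclic_subrings_general n e p he hp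
end

section
/- Let n ≥ 2 and p a prime. There is a unique subring R ⊊ Z^n with Z^n/R ≅ (Z/pZ)^{n-1}, namely the subgroup generated by p·e_1, ..., p·e_{n-1}, and e_1+···+e_n, where e_i are the standard basis vectors. -/
open AddSubgroup Function


def phiAux (m p : ℕ) : (Fin (m+1) → ℤ) →+ (Fin m → ZMod p) :=
  AddMonoidHom.mk' (fun v i =>
      ((v (Fin.castSucc i) : ℤ) : ZMod p) - ((v (Fin.last m) : ℤ) : ZMod p))
    (by intro u v; funext i; simp [Pi.add_apply]; ring)

@[simp] lemma phiAux_apply (m p : ℕ) (v : Fin (m+1) → ℤ) (i : Fin m) :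
    phiAux m p v i = ((v (Fin.castSucc i) : ℤ) : ZMod p) - ((v (Fin.last m) : ℤ) : ZMod p) := rfl

lemma mem_ker_phiAux {m p : ℕ} {v : Fin (m+1) → ℤ} :
    v ∈ (phiAux m p).ker ↔
      ∀ i : Fin (m+1), ((v i : ℤ) : ZMod p) = ((v (Fin.last m) : ℤ) : ZMod p) := by
  constructor
  · intro h i
    refine Fin.lastCases rfl (fun j => ?_) i
    have := congrFun (AddMonoidHom.mem_ker.mp h) j
    simpa [sub_eq_zero] using this
  · intro h
    rw [AddMonoidHom.mem_ker]
    funext j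
    simp [sub_eq_zero, h]

lemma phiAux_surjective (m p : ℕ) [NeZero p] : Surjective (phiAux m p) := by
  intro w
  refine ⟨Fin.snoc (fun i => ((w i).val : ℤ)) 0, ?_⟩
  funext i
  simp [Fin.snoc_castSucc, Fin.snoc_last, ZMod.natCast_val, ZMod.cast_id]

def genSet (m p : ℕ) : Set (Fin (m+1) → ℤ) :=
  {v : Fin (m+1) → ℤ | ∃ i : Fin (m+1), (i : ℕ) < m ∧
      v = fun j => if j = i then (p : ℤ) else 0} ∪ {fun _ => (1 : ℤ)}

lemma ker_phiAux_eq (m p : ℕ) :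
    (phiAux m p).ker = AddSubgroup.closure (genSet m p) := by
  apply le_antisymm
  · intro v hv
    rw [mem_ker_phiAux] at hv
    have hdvd : ∀ j : Fin m, (p : ℤ) ∣ v (Fin.castSucc j) - v (Fin.last m) := by
      intro j
      have := hv (Fin.castSucc j)
      rw [ZMod.intCast_eq_intCast_iff] at this
      exact (Int.ModEq.dvd this.symm)
    choose c hc using fun j => (hdvd j)
    have hv_eq : v = (v (Fin.last m)) • (fun _ => (1:ℤ)) +
        ∑ j : Fin m, (c j) • (fun k => if k = Fin.castSucc j then (p : ℤ) else 0) := by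
      funext k
      refine Fin.lastCases ?_ (fun i => ?_) k
      · simp [Fin.ne_of_gt, (Fin.castSucc_lt_last _), Finset.sum_apply,
          (Fin.castSucc_lt_last _).ne']
      · simp only [Pi.add_apply, Pi.smul_apply, Finset.sum_apply, smul_eq_mul, mul_one,
          mul_ite, mul_zero, Fin.castSucc_inj, Fin.castSucc_injective,
          Function.Injective.eq_iff]
        rw [Finset.sum_ite_eq (Finset.univ) i (fun j => c j * p)]
        simp only [Finset.mem_univ, if_true]
        have := hc i
        linarith [this]
    rw [hv_eq]
    apply add_mem
    · have h1 : (fun _ => (1:ℤ)) ∈ AddSubgroup.closure (genSet m p) :=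
        AddSubgroup.subset_closure (Or.inr rfl)
      exact zsmul_mem h1 _
    · refine sum_mem (fun j _ => zsmul_mem (AddSubgroup.subset_closure ?_) _)
      exact Or.inl ⟨Fin.castSucc j, by simp [j.isLt], rfl⟩
  · rw [closure_le]
    rintro v (⟨i, hi, rfl⟩ | rfl)
    · rw [SetLike.mem_coe, AddMonoidHom.mem_ker]
      funext j
      have h1 : Fin.last m ≠ i := by
        intro h; rw [← h] at hi; simp at hi
      rw [phiAux_apply]
      simp only [Pi.zero_apply]
      split_ifs with h2 <;> simp [h1, ZMod.natCast_self]
    · rw [SetLike.mem_coe, mem_ker_phiAux]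
      intro i; rfl


theorem unique_subring_elementary_quotient (n p : ℕ) (hn : 2 ≤ n) (hp : p.Prime)
    (R : AddSubgroup (Fin n → ℤ)) :
    (IsSubringOf R ∧ R ≠ ⊤ ∧
      Nonempty (((Fin n → ℤ) ⧸ R) ≃+ (Fin (n - 1) → ZMod p))) ↔
    R = AddSubgroup.closure
      ({v : Fin n → ℤ | ∃ i : Fin n, (i : ℕ) < n - 1 ∧
          v = fun j => if j = i then (p : ℤ) else 0} ∪ {fun _ => (1 : ℤ)}) := by
  haveI : Fact p.Prime := ⟨hp⟩
  haveI : NeZero p := ⟨hp.ne_zero⟩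
  obtain ⟨m, rfl⟩ : ∃ m, n = m + 1 := ⟨n - 1, by omega⟩
  have hm : 1 ≤ m := by omega
  simp only [Nat.add_sub_cancel]
  have hset : ({v : Fin (m+1) → ℤ | ∃ i : Fin (m+1), (i : ℕ) < m ∧
      v = fun j => if j = i then (p : ℤ) else 0} ∪ {fun _ => (1 : ℤ)}) = genSet m p := rfl
  rw [hset]
  have e2 : ((Fin (m+1) → ℤ) ⧸ (phiAux m p).ker) ≃+ (Fin m → ZMod p) :=
    QuotientAddGroup.quotientKerEquivOfSurjective _ (phiAux_surjective m p)
  constructor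
  · rintro ⟨hRsub, hRne, ⟨e⟩⟩
    rw [← ker_phiAux_eq]
    have hpR : ∀ v : Fin (m+1) → ℤ, p • v ∈ R := by
      intro v
      have h0 : p • ((v : (Fin (m+1) → ℤ) ⧸ R)) = 0 := by
        apply e.injective
        rw [map_nsmul, map_zero]
        funext i
        simp [nsmul_eq_mul, ZMod.natCast_self]
      rw [← QuotientAddGroup.mk_nsmul] at h0
      exact (QuotientAddGroup.eq_zero_iff _).mp h0
    have hKR : (phiAux m p).ker ≤ R := by
      rw [ker_phiAux_eq, closure_le]
      rintro v (⟨i, hi, rfl⟩ | rfl)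
      · have h3 : (fun j => if j = i then (p:ℤ) else 0)
            = p • (fun j => if j = i then (1:ℤ) else 0) := by
          funext j; by_cases h : j = i <;> simp [h]
        rw [SetLike.mem_coe, h3]; exact hpR _
      · exact hRsub.1
    haveI : Finite ((Fin (m+1) → ℤ) ⧸ (phiAux m p).ker) := Finite.of_equiv _ e2.symm.toEquiv
    have hcard : Nat.card ((Fin (m+1) → ℤ) ⧸ (phiAux m p).ker)
        = Nat.card ((Fin (m+1) → ℤ) ⧸ R) := by
      rw [Nat.card_congr e2.toEquiv, Nat.card_congr e.toEquiv]
      rfl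
    set ψ : ((Fin (m+1) → ℤ) ⧸ (phiAux m p).ker) →+ ((Fin (m+1) → ℤ) ⧸ R) :=
      QuotientAddGroup.map _ _ (AddMonoidHom.id _) (by simpa using hKR) with hψ
    have hψmk : ∀ v : Fin (m+1) → ℤ,
        ψ (QuotientAddGroup.mk v) = QuotientAddGroup.mk v := by
      intro v; rw [hψ, QuotientAddGroup.map_mk]; rfl
    have hψs : Surjective ψ := by
      intro x
      obtain ⟨v, rfl⟩ := QuotientAddGroup.mk_surjective x
      exact ⟨QuotientAddGroup.mk v, hψmk v⟩
    have hψb : Bijective ψ := (Nat.bijective_iff_surjective_and_card ψ).mpr ⟨hψs, hcard⟩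
    ext v
    constructor
    · intro hv
      have h4 : ψ (QuotientAddGroup.mk v) = ψ 0 := by
        rw [map_zero, hψmk]
        exact (QuotientAddGroup.eq_zero_iff v).mpr hv
      exact (QuotientAddGroup.eq_zero_iff v).mp (hψb.1 h4)
    · exact fun h => hKR h
  · intro hReq
    rw [hReq, ← ker_phiAux_eq]
    refine ⟨⟨?_, ?_⟩, ?_, ⟨e2⟩⟩
    · rw [mem_ker_phiAux]; intro i; rfl
    · intro u v hu hv
      rw [mem_ker_phiAux] at hu hv ⊢
      intro i
      simp only [Pi.mul_apply]
      push_cast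
      rw [hu i, hv i]
    · intro h
      have hmem : (fun j => if j = Fin.last m then (1:ℤ) else 0) ∈ (phiAux m p).ker := by
        rw [h]; exact AddSubgroup.mem_top _
      rw [mem_ker_phiAux] at hmem
      have h0 := hmem 0
      have hne : (0 : Fin (m+1)) ≠ Fin.last m := by
        simp [Fin.ext_iff]; omega
      simp [hne] at h0
end

section
/- Let k ≤ n-1 be positive integers, p a prime, and e ≥ 1. The number h_{n,k}(p^e) of subrings R ⊆ Z^n with [Z^n : R] = p^e and corank exactly k satisfies binomial(n-1,k)·g_{k+1}(p^e) ≤ h_{n,k}(p^e) ≤ (n-k)^k·binomial(n-1,k)·g_{k+1}(p^e), where g_{k+1}(p^e) is the number of irreducible subrings of Z^{k+1} of index p^e. -/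
/-!
Call coordinates `i, j` congruent for a subring `R` of index `p ^ e` when `v i ≡ v j [ZMOD p]`
for every `v ∈ R`, and let the pivot of a class be its largest element. Euler's theorem makes
`x ^ (e * φ (p ^ e))` congruent to `0` or `1` modulo `p ^ e` according to whether `p ∣ x`;
taking products of such powers shows that `R` contains the indicator vector of every class.
Hence `R` splits along the classes, and the rank of `ℤⁿ / R` is the number of non-pivots.

Fix the set `A` of non-pivots: `#A = k`, and `A` avoids the top coordinate `t`, which is always
a pivot. Pulling an irreducible subring of `ℤ^(k+1)` back along the restriction to the
coordinates `A ∪ {t}` produces distinct subrings with non-pivot set `A`. Conversely such a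
subring is determined by its pivot map `A → Aᶜ` together with its pullback along the map
`ℤ^(k+1) → ℤⁿ` that spreads the last coordinate over `Aᶜ`, which is an irreducible subring of
`ℤ^(k+1)` of the same index. Summing over the `(n - 1).choose k` admissible sets `A` gives
both bounds.
-/

open Finset
open scoped Classical

namespace IsSubringOf

variable {N : ℕ} {R : AddSubgroup (Fin N → ℤ)}

def toSubring (hR : IsSubringOf R) : Subring (Fin N → ℤ) where
  carrier := R
  mul_mem' := hR.2 _ _
  one_mem' := hR.1
  add_mem' := R.add_mem
  zero_mem' := R.zero_mem
  neg_mem' := R.neg_mem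

lemma comap {M : ℕ} (hR : IsSubringOf R) (f : (Fin M → ℤ) →+* (Fin N → ℤ)) :
    IsSubringOf (R.comap f.toAddMonoidHom) :=
  ⟨by change f 1 ∈ R; rw [map_one]; exact hR.1,
    fun u v hu hv => by simpa using hR.2 _ _ hu hv⟩

end IsSubringOf

section Index

variable {N M : ℕ} {R : AddSubgroup (Fin N → ℤ)}

lemma AddSubgroup.mem_of_intCast_eq (hidx : R.index = M) {u w : Fin N → ℤ} (hu : u ∈ R)
    (h : ∀ m, (w m : ZMod M) = u m) : w ∈ R := by
  have hdvd : ∀ m, (M : ℤ) ∣ w m - u m := fun m =>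
    (ZMod.intCast_eq_intCast_iff_dvd_sub _ _ _).1 (h m).symm
  have hmul : w - u = R.index • fun m => (w m - u m) / M := by
    funext m
    simp [hidx, Int.mul_ediv_cancel' (hdvd m)]
  simpa using R.add_mem (hmul ▸ R.nsmul_index_mem _ : w - u ∈ R) hu

lemma finite_setOf_index_eq (hM : M ≠ 0) :
    {R : AddSubgroup (Fin N → ℤ) | R.index = M}.Finite := by
  let reduce : (Fin N → ℤ) →+ (Fin N → ZMod M) := (Int.castAddHom (ZMod M)).compLeft (Fin N)
  have hker {R : AddSubgroup (Fin N → ℤ)} (hR : R.index = M) : reduce.ker ≤ R := fun v hv =>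
    AddSubgroup.mem_of_intCast_eq hR R.zero_mem fun m => by simpa [reduce] using congrFun hv m
  have : NeZero M := ⟨hM⟩
  refine Set.Finite.of_finite_image (f := fun R => R.map reduce) (Set.toFinite _)
    fun R hR S hS h => ?_
  simpa [AddSubgroup.comap_map_eq, sup_of_le_left (hker hR), sup_of_le_left (hker hS)]
      using congrArg (AddSubgroup.comap reduce) h

lemma finite_subtype_of_index_eq (hM : M ≠ 0) {P : AddSubgroup (Fin N → ℤ) → Prop}
    (hP : ∀ R, P R → R.index = M) : Finite {R // P R} :=
  ((finite_setOf_index_eq hM).subset hP).to_subtype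

end Index

section Pivot

variable {N : ℕ} {p : ℕ} {R : AddSubgroup (Fin N → ℤ)} {i j m t : Fin N}

def CoordCongr (p : ℕ) (R : AddSubgroup (Fin N → ℤ)) (i j : Fin N) : Prop :=
  ∀ v ∈ R, (p : ℤ) ∣ v i - v j

lemma CoordCongr.refl (i : Fin N) : CoordCongr p R i i := fun v _ => by simp

lemma CoordCongr.symm (h : CoordCongr p R i j) : CoordCongr p R j i :=
  fun v hv => dvd_sub_comm.1 (h v hv)

lemma CoordCongr.trans (h : CoordCongr p R i j) (h' : CoordCongr p R j m) :
    CoordCongr p R i m :=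
  fun v hv => by simpa using dvd_add (h v hv) (h' v hv)

noncomputable def pivot (p : ℕ) (R : AddSubgroup (Fin N → ℤ)) (i : Fin N) : Fin N :=
  (univ.filter (CoordCongr p R i)).max' ⟨i, by simpa using CoordCongr.refl i⟩

lemma coordCongr_pivot (i : Fin N) : CoordCongr p R i (pivot p R i) :=
  (mem_filter.1 (max'_mem (univ.filter (CoordCongr p R i)) _)).2

lemma le_pivot_of_coordCongr (h : CoordCongr p R i j) : j ≤ pivot p R i :=
  le_max' _ _ (by simpa using h)

lemma pivot_eq_pivot_iff : pivot p R i = pivot p R j ↔ CoordCongr p R i j := by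
  refine ⟨fun h => (coordCongr_pivot i).trans (h ▸ (coordCongr_pivot j).symm), fun h => ?_⟩
  unfold pivot
  congr 1
  ext l
  simpa using ⟨h.symm.trans, h.trans⟩

lemma pivot_pivot (i : Fin N) : pivot p R (pivot p R i) = pivot p R i :=
  (pivot_eq_pivot_iff.2 (coordCongr_pivot i)).symm

lemma pivot_eq_of_isTop (ht : IsTop t) (h : CoordCongr p R i t) : pivot p R i = t :=
  le_antisymm (ht _) (le_pivot_of_coordCongr h)

lemma pivot_eq_self_of_single_mem (hp : p ≠ 1) (h : Pi.single i 1 ∈ R) : pivot p R i = i := by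
  by_contra hne
  have := coordCongr_pivot (p := p) i _ h
  simp only [Pi.single_eq_same, Pi.single_eq_of_ne hne, sub_zero] at this
  exact hp (by exact_mod_cast Int.eq_one_of_dvd_one (Int.natCast_nonneg p) this)

noncomputable def pivots (p : ℕ) (R : AddSubgroup (Fin N → ℤ)) : Finset (Fin N) :=
  {c | pivot p R c = c}

noncomputable def nonPivots (p : ℕ) (R : AddSubgroup (Fin N → ℤ)) : Finset (Fin N) :=
  (pivots p R)ᶜ

lemma mem_pivots : i ∈ pivots p R ↔ pivot p R i = i := by simp [pivots]

lemma mem_nonPivots : i ∈ nonPivots p R ↔ pivot p R i ≠ i := by simp [nonPivots, mem_pivots]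

lemma pivot_mem_pivots (i : Fin N) : pivot p R i ∈ pivots p R := mem_pivots.2 (pivot_pivot i)

lemma pivot_notMem_nonPivots (i : Fin N) : pivot p R i ∉ nonPivots p R := by
  simpa [nonPivots] using pivot_mem_pivots i

lemma pivot_eq_self_of_notMem (hm : m ∉ nonPivots p R) : pivot p R m = m := by
  simpa [mem_nonPivots] using hm

lemma sub_comp_pivot_eq_zero (v : Fin N → ℤ) (hm : m ∉ nonPivots p R) :
    (v - v ∘ pivot p R) m = 0 := by
  simp [pivot_eq_self_of_notMem hm]

lemma pivot_notMem_of_nonPivots_eq {A : Finset (Fin N)} (hA : nonPivots p R = A) (i : Fin N) :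
    pivot p R i ∉ A :=
  hA ▸ pivot_notMem_nonPivots i

lemma notMem_nonPivots_of_isTop (ht : IsTop t) : t ∉ nonPivots p R := by
  simpa [mem_nonPivots] using pivot_eq_of_isTop ht (CoordCongr.refl t)

lemma sum_pivots_ite_pivot_eq {M : Type*} [AddCommMonoid M] (f : Fin N → M) (m : Fin N) :
    ∑ c ∈ pivots p R, (if pivot p R m = c then f c else 0) = f (pivot p R m) := by
  rw [sum_ite_eq, if_pos (pivot_mem_pivots m)]

end Pivot

lemma intCast_pow_mul_totient {p : ℕ} (hp : p.Prime) (e : ℕ) (x : ℤ) :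
    ((x ^ (e * (p ^ e).totient) : ℤ) : ZMod (p ^ e)) = if (p : ℤ) ∣ x then 0 else 1 := by
  split_ifs with hx
  · obtain ⟨y, rfl⟩ := hx
    have hpe : ((p : ZMod (p ^ e))) ^ e = 0 := by exact_mod_cast ZMod.natCast_self (p ^ e)
    have hφ : (p ^ e).totient ≠ 0 := (Nat.totient_pos.2 (pow_pos hp.pos e)).ne'
    push_cast
    rw [pow_mul, mul_pow, hpe, zero_mul, zero_pow hφ]
  · have hu : IsUnit (x : ZMod (p ^ e)) := by
      rw [ZMod.coe_int_isUnit_iff_isCoprime]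
      push_cast
      exact (((Nat.prime_iff_prime_int.1 hp).coprime_iff_not_dvd).2 hx).pow_left
    rw [Int.cast_pow, mul_comm, pow_mul, ← hu.unit_spec, ← Units.val_pow_eq_pow_val,
      ZMod.pow_totient, Units.val_one, one_pow]

section Indicator

variable {N p e : ℕ} {R : AddSubgroup (Fin N → ℤ)} {c : Fin N}

noncomputable def classIndicator (p : ℕ) (R : AddSubgroup (Fin N → ℤ)) (c : Fin N) :
    Fin N → ℤ :=
  fun m => if pivot p R m = c then 1 else 0

variable (hp : p.Prime) (hR : IsSubringOf R) (hidx : R.index = p ^ e)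
include hp hR hidx

lemma classIndicator_mem (hc : c ∈ pivots p R) : classIndicator p R c ∈ R := by
  have hsep (j : {j // ¬ CoordCongr p R c j}) : ∃ v ∈ R, ¬ (p : ℤ) ∣ v c - v j := by
    simpa [CoordCongr] using j.2
  choose v hvR hv using hsep
  -- Modulo `p ^ e` the `j`-th factor is `1` on the class of `c` and `0` at `j` itself.
  let u : Fin N → ℤ := ∏ j, (v j - ((v j j : ℤ) : Fin N → ℤ)) ^ (e * (p ^ e).totient)
  have hu : u ∈ hR.toSubring := prod_mem fun j _ =>
    hR.toSubring.pow_mem (hR.toSubring.sub_mem (hvR j) (intCast_mem _ _)) _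
  have hclass (m : Fin N) : pivot p R m = c ↔ CoordCongr p R m c := by
    rw [← pivot_eq_pivot_iff, mem_pivots.1 hc]
  refine AddSubgroup.mem_of_intCast_eq hidx hu fun m => ?_
  simp only [u, classIndicator, Finset.prod_apply, Pi.pow_apply, Pi.sub_apply, Pi.intCast_apply,
    Int.cast_prod, intCast_pow_mul_totient hp, hclass, Int.cast_ite, Int.cast_one, Int.cast_zero]
  split_ifs with hm
  · refine (prod_eq_one fun j _ => if_neg fun hdvd => hv j ?_).symm
    simpa using dvd_sub hdvd (hm (v j) (hvR j))
  · refine (prod_eq_zero (i := ⟨m, fun h => hm h.symm⟩) (mem_univ _) ?_).symm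
    simp

lemma comp_pivot_mem (v : Fin N → ℤ) : v ∘ pivot p R ∈ R := by
  have hsum : v ∘ pivot p R =
      ∑ c ∈ pivots p R, ((v c : ℤ) : Fin N → ℤ) * classIndicator p R c := by
    funext m
    simp only [Function.comp_apply, Finset.sum_apply, Pi.mul_apply, Pi.intCast_apply,
      classIndicator, mul_ite, mul_one, mul_zero, sum_pivots_ite_pivot_eq, Int.cast_id]
  rw [hsum]
  exact sum_mem fun c hc =>
    hR.toSubring.mul_mem (intCast_mem _ _) (classIndicator_mem hp hR hidx hc)

end Indicator

section Glue

variable {N p e : ℕ} {R : AddSubgroup (Fin N → ℤ)}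

def glue (π : Fin N → Fin N) (c : Fin N) (v : Fin N → ℤ) : Fin N → ℤ :=
  fun m => if π m = c then v m else v c

lemma glue_of_eq_self {π : Fin N → Fin N} {c m : Fin N} (v : Fin N → ℤ) (hm : π m = m) :
    glue π c v m = v c := by
  by_cases hmc : m = c <;> simp [glue, hm, hmc]

lemma mem_iff_forall_glue_mem (hp : p.Prime) (hR : IsSubringOf R) (hidx : R.index = p ^ e)
    {v : Fin N → ℤ} : v ∈ R ↔ ∀ c, pivot p R c = c → glue (pivot p R) c v ∈ R := by
  constructor
  · intro hv c hc
    have hglue : glue (pivot p R) c v =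
        v * classIndicator p R c + ((v c : ℤ) : Fin N → ℤ) * (1 - classIndicator p R c) := by
      funext m
      by_cases hm : pivot p R m = c <;> simp [glue, classIndicator, hm]
    have hind := classIndicator_mem hp hR hidx (mem_pivots.2 hc)
    rw [hglue]
    exact add_mem (hR.toSubring.mul_mem hv hind)
      (hR.toSubring.mul_mem (intCast_mem _ _) (hR.toSubring.sub_mem (one_mem _) hind))
  · intro h
    have hsum : v = ∑ c ∈ pivots p R, glue (pivot p R) c v * classIndicator p R c := by
      funext m
      simp only [Finset.sum_apply, Pi.mul_apply, classIndicator, mul_ite, mul_one, mul_zero]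
      rw [sum_pivots_ite_pivot_eq (fun c => glue (pivot p R) c v m)]
      simp [glue]
    rw [hsum]
    exact sum_mem fun c hc => hR.toSubring.mul_mem (h c (mem_pivots.1 hc))
      (classIndicator_mem hp hR hidx hc)

end Glue

section Rank

variable {N : ℕ} {R : AddSubgroup (Fin N → ℤ)}

lemma genLE_of_closure_sup_eq_top {k : ℕ} (s : Finset (Fin N → ℤ)) (hs : s.card ≤ k)
    (h : AddSubgroup.closure (s : Set (Fin N → ℤ)) ⊔ R = ⊤) : GenLE R k := by
  refine ⟨s.image (QuotientAddGroup.mk' R), card_image_le.trans hs, ?_⟩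
  rw [coe_image, ← AddMonoidHom.map_closure, ← sup_bot_eq (AddSubgroup.map _ _),
    ← QuotientAddGroup.map_mk'_self, ← AddSubgroup.map_sup, h,
    AddSubgroup.map_top_of_surjective _ (QuotientAddGroup.mk'_surjective R)]

lemma rankGe_of_surjective {K ι : Type*} [CommRing K] [Nontrivial K] [Fintype ι]
    (f : (Fin N → ℤ) →+ (ι → K)) (hf : Function.Surjective f) (hR : R ≤ f.ker) :
    RankGe R (Fintype.card ι) := by
  intro Q hQ
  let g := QuotientAddGroup.lift R f hR
  have hspan : Submodule.span K ((Q.image g : Finset _) : Set (ι → K)) = ⊤ := by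
    refine eq_top_iff.2 fun x _ => ?_
    have hx : x ∈ AddSubgroup.closure ((Q.image g : Finset _) : Set (ι → K)) := by
      rw [coe_image, ← AddMonoidHom.map_closure, hQ, AddSubgroup.map_top_of_surjective]
      · trivial
      · exact QuotientAddGroup.lift_surjective_of_surjective _ _ hf _
    exact (AddSubgroup.closure_le (Submodule.span K _).toAddSubgroup).2 Submodule.subset_span hx
  calc Fintype.card ι = Module.finrank K (ι → K) := (Module.finrank_fintype_fun_eq_card K).symm
    _ ≤ (Q.image g).card := by
      have := finrank_span_finset_le_card (R := K) (Q.image g)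
      rwa [Set.finrank, hspan, finrank_top] at this
    _ ≤ Q.card := card_image_le

lemma RankEq.eq {k k' : ℕ} (h : RankEq R k) (h' : RankEq R k') : k = k' := by
  obtain ⟨⟨s, hs, hsR⟩, hge⟩ := h
  obtain ⟨⟨s', hs', hs'R⟩, hge'⟩ := h'
  exact le_antisymm ((hge s' hs'R).trans hs') ((hge' s hsR).trans hs)

lemma mem_closure_image_single {A : Finset (Fin N)} {u : Fin N → ℤ} (hu : ∀ m ∉ A, u m = 0) :
    u ∈ AddSubgroup.closure ((A.image fun i => Pi.single i 1 : Finset (Fin N → ℤ)) :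
      Set (Fin N → ℤ)) := by
  have hsum : u = ∑ i ∈ A, u i • Pi.single i 1 := by
    funext m
    by_cases hm : m ∈ A <;> simp [Finset.sum_apply, Pi.single_apply, hm, hu]
  rw [hsum]
  exact sum_mem fun i hi =>
    zsmul_mem (AddSubgroup.subset_closure (mem_coe.2 (mem_image_of_mem _ hi))) _

end Rank

section RankOfSubring

variable {N p e : ℕ} {R : AddSubgroup (Fin N → ℤ)}

lemma rankGe_card_nonPivots (hp : p ≠ 1) : RankGe R (nonPivots p R).card := by
  have : Nontrivial (ZMod p) := ZMod.nontrivial_iff.2 hp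
  let f : (Fin N → ℤ) →+ (nonPivots p R → ZMod p) := AddMonoidHom.mk'
    (fun v a => ((v a - v (pivot p R a) : ℤ) : ZMod p))
    (fun u v => by funext a; simp only [Pi.add_apply]; push_cast; ring)
  have hf : Function.Surjective f := fun g => by
    refine ⟨fun m => if h : m ∈ nonPivots p R then ((g ⟨m, h⟩).cast : ℤ) else 0,
      funext fun a => ?_⟩
    simp [f, pivot_notMem_nonPivots]
  have hker : R ≤ f.ker := fun v hv => funext fun a =>
    (ZMod.intCast_zmod_eq_zero_iff_dvd _ _).2 (coordCongr_pivot a v hv)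
  simpa using rankGe_of_surjective f hf hker

variable (hp : p.Prime) (hR : IsSubringOf R) (hidx : R.index = p ^ e)
include hp hR hidx

lemma genLE_card_nonPivots : GenLE R (nonPivots p R).card := by
  refine genLE_of_closure_sup_eq_top ((nonPivots p R).image fun i => Pi.single i 1) card_image_le
    (eq_top_iff.2 fun v _ => ?_)
  rw [← sub_add_cancel v (v ∘ pivot p R)]
  exact add_mem (AddSubgroup.mem_sup_left (mem_closure_image_single fun m hm =>
    sub_comp_pivot_eq_zero v hm)) (AddSubgroup.mem_sup_right (comp_pivot_mem hp hR hidx v))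

lemma rankEq_iff_card_nonPivots {k : ℕ} : RankEq R k ↔ (nonPivots p R).card = k :=
  ⟨fun h => RankEq.eq ⟨genLE_card_nonPivots hp hR hidx, rankGe_card_nonPivots hp.ne_one⟩ h,
    fun h => h ▸ ⟨genLE_card_nonPivots hp hR hidx, rankGe_card_nonPivots hp.ne_one⟩⟩

end RankOfSubring

section Coordinates

variable {N k : ℕ} {A : Finset (Fin N)} (enum : Fin k ≃ A) {t : Fin N}

def precomp {M : ℕ} (σ : Fin N → Fin M) : (Fin M → ℤ) →+* (Fin N → ℤ) :=
  RingHom.pi fun i => Pi.evalRingHom (fun _ => ℤ) (σ i)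

@[simp]
lemma precomp_apply {M : ℕ} (σ : Fin N → Fin M) (w : Fin M → ℤ) (i : Fin N) :
    precomp σ w i = w (σ i) := rfl

/-- `precomp (collapse enum)` spreads the last coordinate of `ℤ^(k+1)` over `Aᶜ`, while
`precomp (expand enum t)` restricts `ℤⁿ` to the coordinates of `A` followed by `t`. -/
def collapse (enum : Fin k ≃ A) (i : Fin N) : Fin (k + 1) :=
  if h : i ∈ A then (enum.symm ⟨i, h⟩).castSucc else Fin.last k

def expand (enum : Fin k ≃ A) (t : Fin N) : Fin (k + 1) → Fin N :=
  Fin.snoc (fun j => (enum j : Fin N)) t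

@[simp]
lemma collapse_enum (j : Fin k) : collapse enum (enum j) = j.castSucc := by
  simp [collapse]

@[simp]
lemma collapse_of_notMem {i : Fin N} (hi : i ∉ A) : collapse enum i = Fin.last k := by
  simp [collapse, hi]

@[simp]
lemma expand_castSucc (j : Fin k) : expand enum t j.castSucc = enum j := by
  simp [expand]

@[simp]
lemma expand_last : expand enum t (Fin.last k) = t := by
  simp [expand]

lemma precomp_collapse_expand (ht : t ∉ A) (w : Fin (k + 1) → ℤ) :
    precomp (expand enum t) (precomp (collapse enum) w) = w := by
  funext j
  induction j using Fin.lastCases <;> simp [ht]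

lemma precomp_expand_collapse {u : Fin N → ℤ} (hu : ∀ m ∉ A, u m = u t) :
    precomp (collapse enum) (precomp (expand enum t) u) = u := by
  funext m
  by_cases hm : m ∈ A
  · simp [collapse, hm]
  · simp [hm, hu m hm]

end Coordinates

abbrev IrreducibleSubrings (K p M : ℕ) :=
  {S : AddSubgroup (Fin K → ℤ) // IsSubringOf S ∧ S.index = M ∧
    ∀ v ∈ S, ∀ i j : Fin K, (p : ℤ) ∣ v i - v j}

abbrev SubringsWithNonPivots {N : ℕ} (p M : ℕ) (A : Finset (Fin N)) :=
  {R : AddSubgroup (Fin N → ℤ) // (IsSubringOf R ∧ R.index = M) ∧ nonPivots p R = A}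

section Fiber

variable {N k p e : ℕ} {A : Finset (Fin N)} (enum : Fin k ≃ A) {t : Fin N}

lemma nonPivots_comap_expand (hp : p ≠ 1) (ht : IsTop t) (htA : t ∉ A)
    {S : AddSubgroup (Fin (k + 1) → ℤ)} (hS : ∀ v ∈ S, ∀ i j, (p : ℤ) ∣ v i - v j) :
    nonPivots p (S.comap (precomp (expand enum t)).toAddMonoidHom) = A := by
  ext i
  rw [mem_nonPivots]
  by_cases hi : i ∈ A
  · have hcongr : CoordCongr p (S.comap (precomp (expand enum t)).toAddMonoidHom) i t :=
      fun v hv => by simpa using hS _ hv (enum.symm ⟨i, hi⟩).castSucc (Fin.last k)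
    rw [pivot_eq_of_isTop ht hcongr]
    exact iff_of_true (fun h => htA (h ▸ hi)) hi
  · simp only [hi, iff_false, not_not]
    by_cases hit : i = t
    · subst hit
      exact pivot_eq_of_isTop ht (CoordCongr.refl _)
    · refine pivot_eq_self_of_single_mem hp ?_
      have hzero : precomp (expand enum t) (Pi.single i 1) = 0 := by
        funext j
        induction j using Fin.lastCases with
        | last => simp [Ne.symm hit]
        | cast j =>
          simpa using Pi.single_eq_of_ne (M := fun _ => ℤ)
            (fun h : (enum j : Fin N) = i => hi (h ▸ (enum j).2)) 1
      simp [hzero]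

lemma index_comap_collapse (hp : p.Prime) {R : AddSubgroup (Fin N → ℤ)} (hR : IsSubringOf R)
    (hidx : R.index = p ^ e) (hA : nonPivots p R = A) (htA : t ∉ A) :
    (R.comap (precomp (collapse enum)).toAddMonoidHom).index = p ^ e := by
  have hsup : (precomp (collapse enum)).toAddMonoidHom.range ⊔ R = ⊤ := by
    refine eq_top_iff.2 fun v _ => ?_
    rw [← sub_add_cancel v (v ∘ pivot p R)]
    have hvanish : ∀ m ∉ A, (v - v ∘ pivot p R) m = (v - v ∘ pivot p R) t := fun m hm => by
      rw [sub_comp_pivot_eq_zero v (hA ▸ hm), sub_comp_pivot_eq_zero v (hA ▸ htA)]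
    exact add_mem (AddSubgroup.mem_sup_left
        ⟨precomp (expand enum t) (v - v ∘ pivot p R), precomp_expand_collapse enum hvanish⟩)
      (AddSubgroup.mem_sup_right (comp_pivot_mem hp hR hidx v))
  rw [AddSubgroup.index_comap, ← AddSubgroup.relIndex_sup_right, hsup,
    AddSubgroup.relIndex_top_right, hidx]

lemma irreducible_comap_collapse {R : AddSubgroup (Fin N → ℤ)} (hA : nonPivots p R = A) :
    ∀ w ∈ R.comap (precomp (collapse enum)).toAddMonoidHom, ∀ i j : Fin (k + 1),
      (p : ℤ) ∣ w i - w j := by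
  intro w hw
  have hlast (j : Fin (k + 1)) : (p : ℤ) ∣ w j - w (Fin.last k) := by
    induction j using Fin.lastCases with
    | last => simp
    | cast j =>
      simpa [pivot_notMem_of_nonPivots_eq hA] using coordCongr_pivot (p := p) (R := R) (enum j) _ hw
  intro i j
  simpa using dvd_sub (hlast i) (hlast j)

lemma mem_iff_forall_glue_mem_comap (hp : p.Prime) {R : AddSubgroup (Fin N → ℤ)}
    (hR : IsSubringOf R) (hidx : R.index = p ^ e) (hA : nonPivots p R = A) (htA : t ∉ A)
    {v : Fin N → ℤ} :
    v ∈ R ↔ ∀ c, pivot p R c = c → precomp (expand enum t) (glue (pivot p R) c v) ∈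
      R.comap (precomp (collapse enum)).toAddMonoidHom := by
  rw [mem_iff_forall_glue_mem hp hR hidx]
  refine forall₂_congr fun c _ => ?_
  have hconst : ∀ m ∉ A, glue (pivot p R) c v m = glue (pivot p R) c v t := fun m hm => by
    rw [glue_of_eq_self v (pivot_eq_self_of_notMem (hA ▸ hm)),
      glue_of_eq_self v (pivot_eq_self_of_notMem (hA ▸ htA))]
  simp [precomp_expand_collapse enum hconst]

end Fiber

lemma card_subtype_eq_sum_card_fiber {α β : Type*} {P : α → Prop} (hP : {a | P a}.Finite)
    (f : α → β) (s : Finset β) :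
    Nat.card {a // P a ∧ f a ∈ s} = ∑ b ∈ s, Nat.card {a // P a ∧ f a = b} := by
  have (b : s) : Finite {a // P a ∧ f a = b} := (hP.subset fun _ ha => ha.1).to_subtype
  rw [← sum_coe_sort s, ← Nat.card_sigma]
  exact Nat.card_congr
    { toFun := fun a => ⟨⟨f a, a.2.2⟩, a.1, a.2.1, rfl⟩
      invFun := fun x => ⟨x.2.1, x.2.2.1, by rw [x.2.2.2]; exact x.1.2⟩
      left_inv := fun _ => rfl
      right_inv := fun x => Sigma.subtype_ext (Subtype.ext x.2.2.2) rfl }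

section Counting

variable {N k p e : ℕ} {A : Finset (Fin N)} {t : Fin N}

theorem card_irreducibleSubrings_le_card_subringsWithNonPivots (hp : p.Prime) (ht : IsTop t)
    (htA : t ∉ A) (hA : A.card = k) :
    Nat.card (IrreducibleSubrings (k + 1) p (p ^ e)) ≤
      Nat.card (SubringsWithNonPivots p (p ^ e) A) := by
  have : Finite (SubringsWithNonPivots p (p ^ e) A) :=
    finite_subtype_of_index_eq (pow_ne_zero e hp.ne_zero) fun _ hR => hR.1.2
  let enum : Fin k ≃ A := (A.equivFinOfCardEq hA).symm
  have hsurj : Function.Surjective (precomp (expand enum t)) :=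
    fun w => ⟨_, precomp_collapse_expand enum htA w⟩
  have hcomap (S : AddSubgroup (Fin (k + 1) → ℤ)) :
      (S.comap (precomp (expand enum t)).toAddMonoidHom).comap
        (precomp (collapse enum)).toAddMonoidHom = S := by
    ext w
    simp [precomp_collapse_expand enum htA]
  refine Nat.card_le_card_of_injective
    (fun S => ⟨S.1.comap (precomp (expand enum t)).toAddMonoidHom,
      ⟨S.2.1.comap _, (S.1.index_comap_of_surjective hsurj).trans S.2.2.1⟩,
      nonPivots_comap_expand enum hp.ne_one ht htA S.2.2.2⟩) fun S₁ S₂ h => Subtype.ext ?_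
  rw [← hcomap S₁.1, ← hcomap S₂.1]
  exact congrArg (fun R : SubringsWithNonPivots p (p ^ e) A => AddSubgroup.comap _ R.1) h

theorem card_subringsWithNonPivots_le (hp : p.Prime) (htA : t ∉ A) (hA : A.card = k) :
    Nat.card (SubringsWithNonPivots p (p ^ e) A) ≤
      (N - k) ^ k * Nat.card (IrreducibleSubrings (k + 1) p (p ^ e)) := by
  have : Finite (IrreducibleSubrings (k + 1) p (p ^ e)) :=
    finite_subtype_of_index_eq (pow_ne_zero e hp.ne_zero) fun _ hS => hS.2.1
  let enum : Fin k ≃ A := (A.equivFinOfCardEq hA).symm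
  let pivotCode (R : SubringsWithNonPivots p (p ^ e) A) : A → (Aᶜ : Finset (Fin N)) :=
    fun a => ⟨pivot p R.1 a, mem_compl.2 (pivot_notMem_of_nonPivots_eq R.2.2 _)⟩
  let glued (R : SubringsWithNonPivots p (p ^ e) A) : IrreducibleSubrings (k + 1) p (p ^ e) :=
    ⟨R.1.comap (precomp (collapse enum)).toAddMonoidHom, R.2.1.1.comap _,
      index_comap_collapse enum hp R.2.1.1 R.2.1.2 R.2.2 htA,
      irreducible_comap_collapse enum R.2.2⟩
  have hinj : Function.Injective fun R => (pivotCode R, glued R) := by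
    rintro ⟨R₁, ⟨hR₁, hidx₁⟩, hA₁⟩ ⟨R₂, ⟨hR₂, hidx₂⟩, hA₂⟩ h
    obtain ⟨hcode, hglued⟩ := Prod.mk.inj h
    have hpiv : pivot p R₁ = pivot p R₂ := funext fun m => by
      by_cases hm : m ∈ A
      · exact congrArg Subtype.val (congrFun hcode ⟨m, hm⟩)
      · rw [pivot_eq_self_of_notMem (hA₁ ▸ hm), pivot_eq_self_of_notMem (hA₂ ▸ hm)]
    have hcomap : R₁.comap (precomp (collapse enum)).toAddMonoidHom =
        R₂.comap (precomp (collapse enum)).toAddMonoidHom := congrArg Subtype.val hglued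
    refine Subtype.ext (AddSubgroup.ext fun v => ?_)
    rw [mem_iff_forall_glue_mem_comap enum hp hR₁ hidx₁ hA₁ htA,
      mem_iff_forall_glue_mem_comap enum hp hR₂ hidx₂ hA₂ htA, hpiv, hcomap]
  calc _ ≤ Nat.card ((A → (Aᶜ : Finset (Fin N))) × IrreducibleSubrings (k + 1) p (p ^ e)) :=
        Nat.card_le_card_of_injective _ hinj
    _ = _ := by simp [Nat.card_prod, hA]

lemma card_rankEq_eq_sum_card_subringsWithNonPivots (hp : p.Prime) (ht : IsTop t) :
    Nat.card {R : AddSubgroup (Fin N → ℤ) // IsSubringOf R ∧ R.index = p ^ e ∧ RankEq R k} =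
      ∑ A ∈ powersetCard k (univ.erase t), Nat.card (SubringsWithNonPivots p (p ^ e) A) := by
  rw [← card_subtype_eq_sum_card_fiber
    ((finite_setOf_index_eq (pow_ne_zero e hp.ne_zero)).subset fun R hR => hR.2) (nonPivots p)]
  refine Nat.card_congr (Equiv.subtypeEquivRight fun R => ?_)
  rw [← and_assoc]
  refine and_congr_right fun ⟨hR, hidx⟩ => ?_
  simp [rankEq_iff_card_nonPivots hp hR hidx, subset_erase, notMem_nonPivots_of_isTop ht]

end Counting

theorem corank_k_count_bounds_general (n k e p : ℕ) (hp : p.Prime)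
    (hk : 1 ≤ k) (hkn : k ≤ n - 1) :
    (n - 1).choose k *
      Nat.card {S : AddSubgroup (Fin (k + 1) → ℤ) // IsSubringOf S ∧ S.index = p ^ e ∧
        ∀ v ∈ S, ∀ i j : Fin (k + 1), (p : ℤ) ∣ v i - v j} ≤
      Nat.card {R : AddSubgroup (Fin n → ℤ) // IsSubringOf R ∧ R.index = p ^ e ∧
        RankEq R k} ∧
    Nat.card {R : AddSubgroup (Fin n → ℤ) // IsSubringOf R ∧ R.index = p ^ e ∧
        RankEq R k} ≤
      (n - k) ^ k * (n - 1).choose k *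
      Nat.card {S : AddSubgroup (Fin (k + 1) → ℤ) // IsSubringOf S ∧ S.index = p ^ e ∧
        ∀ v ∈ S, ∀ i j : Fin (k + 1), (p : ℤ) ∣ v i - v j} := by
  let t : Fin n := ⟨n - 1, by omega⟩
  have ht : IsTop t := fun i => Fin.le_def.2 (Nat.le_sub_one_of_lt i.2)
  have hmem {A : Finset (Fin n)} (hA : A ∈ powersetCard k (univ.erase t)) :
      t ∉ A ∧ A.card = k :=
    ⟨fun h => (mem_erase.1 ((mem_powersetCard.1 hA).1 h)).1 rfl, (mem_powersetCard.1 hA).2⟩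
  have hcard : (powersetCard k (univ.erase t)).card = (n - 1).choose k := by simp
  rw [card_rankEq_eq_sum_card_subringsWithNonPivots hp ht]
  constructor
  · calc _ = ∑ A ∈ powersetCard k (univ.erase t),
            Nat.card (IrreducibleSubrings (k + 1) p (p ^ e)) := by
          rw [sum_const, hcard, smul_eq_mul]
      _ ≤ _ := sum_le_sum fun A hA =>
          card_irreducibleSubrings_le_card_subringsWithNonPivots hp ht (hmem hA).1 (hmem hA).2
  · calc _ ≤ ∑ A ∈ powersetCard k (univ.erase t),
            (n - k) ^ k * Nat.card (IrreducibleSubrings (k + 1) p (p ^ e)) :=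
          sum_le_sum fun A hA => card_subringsWithNonPivots_le hp (hmem hA).1 (hmem hA).2
      _ = _ := by rw [sum_const, hcard, smul_eq_mul]; ring

theorem corank_k_count_bounds (n k e p : ℕ) (hp : p.Prime)
    (hk : 1 ≤ k) (hkn : k ≤ n - 1) (he : 1 ≤ e) :
    (n - 1).choose k *
      Nat.card {S : AddSubgroup (Fin (k + 1) → ℤ) // IsSubringOf S ∧ S.index = p ^ e ∧
        ∀ v ∈ S, ∀ i j : Fin (k + 1), (p : ℤ) ∣ v i - v j} ≤
      Nat.card {R : AddSubgroup (Fin n → ℤ) // IsSubringOf R ∧ R.index = p ^ e ∧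
        RankEq R k} ∧
    Nat.card {R : AddSubgroup (Fin n → ℤ) // IsSubringOf R ∧ R.index = p ^ e ∧
        RankEq R k} ≤
      (n - k) ^ k * (n - 1).choose k *
      Nat.card {S : AddSubgroup (Fin (k + 1) → ℤ) // IsSubringOf S ∧ S.index = p ^ e ∧
        ∀ v ∈ S, ∀ i j : Fin (k + 1), (p : ℤ) ∣ v i - v j} :=
  corank_k_count_bounds_general n k e p hp hk hkn
end
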